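/- arXiv:1209.3957 — 2 statements merged into one kernel-verified Lean document; each statement's English description precedes it below -/
import Mathlib

section
/- Let 0<β<1, let M_β be the Mittag-Leffler process (the inverse of a β-stable subordinator) on a probability space (Ω',F',P'), and let ν be the measure on [0,∞) with ν(dx) = (1−β)x^{−β}dx. Then for every ε>0, (P'×ν)( { (ω',x) : M_β((1−x)_+, ω') > ε and M_β((n+1−x)_+, ω') − M_β((n−x)_+, ω') > ε } ) → 0 as n → ∞. (This is the key fact showing that the increment process of the β-Mittag-Leffler fractional SαS motion is mixing.) -/
/-!
Since `ν` is carried by `[0, ∞)` and `M(0) = 0`, only `x ∈ [0, 1)` contributes, and pathwise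
`M(b) - M(a)` is at most the time `S` spends in `[a, b)`. The expected sojourn time is
`U(b) - U(a)` for the renewal function `U(t) = ∫₀^∞ P(S u < t) du = E[M(t)]`. By Tonelli and the
Laplace transform of `S`, `U` has Laplace transform `θ ^ (-(β + 1))`, which is also that of
`t ^ β / Γ(β + 1)`; since a moment generating function finite near `0` determines the measure,
and `U` is monotone, `U(t) = t ^ β / Γ(β + 1)` for every `t > 0`. Markov's inequality on
`Ω × [0, 1)` then bounds the `n`-th measure by a constant times `(n + 1) ^ β - (n - 1) ^ β`,
which tends to `0` because `β < 1`.
-/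

open MeasureTheory ProbabilityTheory Filter
open scoped ENNReal

/-- The (generalized right-continuous) inverse of the path `S ω`, i.e. the
Mittag-Leffler process when `S` is a `β`-stable subordinator. -/
noncomputable def invProc {Ω : Type*} (S : Ω → ℝ → ℝ) (ω : Ω) (t : ℝ) : ℝ :=
  sInf {u : ℝ | 0 ≤ u ∧ t ≤ S ω u}

/-- `S` is a `β`-stable subordinator on the probability space `(Ω, P)`:
it starts at `0`, has nondecreasing right-continuous sample paths, independent
increments, and Laplace transform `E[exp (-θ (S u - S v))] = exp (-(u-v) θ^β)`. -/
structure IsStableSubordinator {Ω : Type*} [MeasurableSpace Ω] (β : ℝ) (P : Measure Ω)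
    (S : Ω → ℝ → ℝ) : Prop where
  zero : ∀ ω, S ω 0 = 0
  mono : ∀ ω, Monotone (S ω)
  rightCont : ∀ ω, ∀ u : ℝ, ContinuousWithinAt (S ω) (Set.Ici u) u
  meas : ∀ u : ℝ, Measurable fun ω => S ω u
  indep : ∀ (n : ℕ) (t : Fin (n + 1) → ℝ), Monotone t → 0 ≤ t 0 →
    iIndepFun
      (fun i : Fin n => fun ω => S ω (t i.succ) - S ω (t i.castSucc)) P
  laplace : ∀ θ : ℝ, 0 ≤ θ → ∀ v u : ℝ, 0 ≤ v → v ≤ u →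
    ∫ ω, Real.exp (-θ * (S ω u - S ω v)) ∂P = Real.exp (-(u - v) * θ ^ β)

/-- The measure `ν(dx) = (1-β) x^{-β} dx` on `[0,∞)`. -/
noncomputable def nuMeasure (β : ℝ) : Measure ℝ :=
  (volume.restrict (Set.Ici (0 : ℝ))).withDensity
    (fun x => ENNReal.ofReal ((1 - β) * x ^ (-β)))

open Set Topology

theorem MeasureTheory.Measure.ext_of_mgf_eqOn_Ioo {μ ν : Measure ℝ} [IsFiniteMeasure μ]
    [IsFiniteMeasure ν] {a b : ℝ} (ha : a < 0) (hb : 0 < b)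
    (hμ : Ioo a b ⊆ integrableExpSet id μ) (hν : Ioo a b ⊆ integrableExpSet id ν)
    (h : EqOn (mgf id μ) (mgf id ν) (Ioo a b)) : μ = ν := by
  set U : Set ℂ := {z | z.re ∈ Ioo a b}
  have hU : ∀ {ρ : Measure ℝ}, Ioo a b ⊆ integrableExpSet id ρ →
      U ⊆ {z | z.re ∈ interior (integrableExpSet id ρ)} := fun hρ _ hz =>
    interior_maximal hρ isOpen_Ioo hz
  have h0 : ∀ t : ℝ, (t * Complex.I : ℂ) ∈ U := fun t => by simp [U, ha, hb]
  have hreal : ∃ᶠ x : ℝ in 𝓝[≠] 0, complexMGF id μ x = complexMGF id ν x := by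
    refine Eventually.frequently ?_
    filter_upwards [nhdsWithin_le_nhds (Ioo_mem_nhds ha hb)] with x hx
    rw [complexMGF_ofReal, complexMGF_ofReal, h hx]
  have hofReal : Tendsto ((↑) : ℝ → ℂ) (𝓝[≠] 0) (𝓝[≠] 0) := by
    refine tendsto_nhdsWithin_iff.2 ⟨?_, eventually_nhdsWithin_of_forall fun x hx => ?_⟩
    · exact Complex.ofReal_zero ▸ Complex.continuous_ofReal.continuousAt.tendsto.mono_left
        nhdsWithin_le_nhds
    · simpa using hx
  -- the identity theorem carries the equality from the real axis to the strip `a < re z < b`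
  have heq : EqOn (complexMGF id μ) (complexMGF id ν) U :=
    (analyticOnNhd_complexMGF.mono (hU hμ)).eqOn_of_preconnected_of_frequently_eq
      (analyticOnNhd_complexMGF.mono (hU hν))
      ((convex_Ioo a b).linear_preimage Complex.reLm).isPreconnected
      (by simpa using h0 0) (by simpa using hofReal.frequently hreal)
  refine Measure.ext_of_charFun (funext fun t => ?_)
  rw [← complexMGF_id_mul_I, ← complexMGF_id_mul_I, heq (h0 t)]

section LaplaceUniqueness

variable {μ : Measure ℝ} {f g : ℝ → ℝ≥0∞}

lemma mgf_id_withDensity (hf : Measurable f) (s : ℝ) :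
    mgf id (μ.withDensity f) s = (∫⁻ t, ENNReal.ofReal (Real.exp (s * t)) * f t ∂μ).toReal := by
  rw [mgf, integral_eq_lintegral_of_nonneg_ae (ae_of_all _ fun t => (Real.exp_pos _).le)
    (by fun_prop), lintegral_withDensity_eq_lintegral_mul _ hf (by fun_prop)]
  simp only [id, Pi.mul_apply, mul_comm]

lemma mem_integrableExpSet_id_withDensity (hf : Measurable f) {s : ℝ}
    (hs : ∫⁻ t, ENNReal.ofReal (Real.exp (s * t)) * f t ∂μ ≠ ∞) :
    s ∈ integrableExpSet id (μ.withDensity f) := by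
  refine ⟨by fun_prop, ?_⟩
  rw [HasFiniteIntegral, lintegral_withDensity_eq_lintegral_mul _ hf (by fun_prop)]
  simpa [Real.enorm_eq_ofReal (Real.exp_pos _).le, mul_comm] using hs.lt_top

theorem ae_eq_of_lintegral_exp_mul_eq [SigmaFinite μ] (hf : Measurable f) (hg : Measurable g)
    {a b : ℝ} (ha : a < 0) (hb : 0 < b)
    (hfin : ∀ s ∈ Ioo a b, ∫⁻ t, ENNReal.ofReal (Real.exp (s * t)) * f t ∂μ ≠ ∞)
    (h : ∀ s ∈ Ioo a b, ∫⁻ t, ENNReal.ofReal (Real.exp (s * t)) * f t ∂μ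
      = ∫⁻ t, ENNReal.ofReal (Real.exp (s * t)) * g t ∂μ) :
    f =ᵐ[μ] g := by
  have hgfin : ∀ s ∈ Ioo a b, ∫⁻ t, ENNReal.ofReal (Real.exp (s * t)) * g t ∂μ ≠ ∞ :=
    fun s hs => h s hs ▸ hfin s hs
  have : IsFiniteMeasure (μ.withDensity f) :=
    isFiniteMeasure_withDensity (by simpa using hfin 0 ⟨ha, hb⟩)
  have : IsFiniteMeasure (μ.withDensity g) :=
    isFiniteMeasure_withDensity (by simpa using hgfin 0 ⟨ha, hb⟩)
  rw [← withDensity_eq_iff_of_sigmaFinite hf.aemeasurable hg.aemeasurable]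
  refine Measure.ext_of_mgf_eqOn_Ioo ha hb
    (fun s hs => mem_integrableExpSet_id_withDensity hf (hfin s hs))
    (fun s hs => mem_integrableExpSet_id_withDensity hg (hgfin s hs)) fun s hs => ?_
  rw [mgf_id_withDensity hf, mgf_id_withDensity hg, h s hs]

end LaplaceUniqueness

lemma lintegral_exp_neg_mul_Ioi {θ : ℝ} (hθ : 0 < θ) (c : ℝ) :
    ∫⁻ t in Ioi c, ENNReal.ofReal (Real.exp (-(θ * t)))
      = ENNReal.ofReal (Real.exp (-(θ * c)) / θ) := by
  have hθ' : -θ < 0 := neg_lt_zero.2 hθ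
  have hi : IntegrableOn (fun t => Real.exp (-(θ * t))) (Ioi c) := by
    simpa using integrableOn_exp_mul_Ioi hθ' c
  rw [← ofReal_integral_eq_lintegral_ofReal hi (ae_of_all _ fun t => (Real.exp_pos _).le)]
  congr 1
  simpa [neg_div_neg_eq] using integral_exp_mul_Ioi hθ' c

lemma lintegral_exp_neg_mul_mul_rpow_div_Gamma {θ β : ℝ} (hθ : 0 < θ) (hβ : 0 < β + 1) :
    ∫⁻ t in Ioi 0,
        ENNReal.ofReal (Real.exp (-(θ * t))) * ENNReal.ofReal (t ^ β / Real.Gamma (β + 1))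
      = ENNReal.ofReal ((1 / θ) ^ (β + 1)) := by
  have h := Real.integral_rpow_mul_exp_neg_mul_Ioi hβ hθ
  rw [integral_eq_lintegral_of_nonneg_ae (ae_restrict_of_forall_mem measurableSet_Ioi
    fun t (ht : 0 < t) => by positivity) (by fun_prop)] at h
  have hfin : ∫⁻ t in Ioi 0, ENNReal.ofReal (t ^ (β + 1 - 1) * Real.exp (-(θ * t))) ≠ ∞ := by
    intro htop
    rw [htop, ENNReal.toReal_top] at h
    exact (by positivity : 0 < (1 / θ) ^ (β + 1) * Real.Gamma (β + 1)).ne h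
  calc _ = ∫⁻ t in Ioi 0, ENNReal.ofReal (Real.Gamma (β + 1))⁻¹ *
        ENNReal.ofReal (t ^ (β + 1 - 1) * Real.exp (-(θ * t))) := by
        refine setLIntegral_congr_fun measurableSet_Ioi fun t (ht : 0 < t) => ?_
        rw [← ENNReal.ofReal_mul (Real.exp_pos _).le, ← ENNReal.ofReal_mul (by positivity),
          add_sub_cancel_right]
        ring_nf
    _ = ENNReal.ofReal ((1 / θ) ^ (β + 1)) := by
        rw [lintegral_const_mul _ (by fun_prop), ← ENNReal.ofReal_toReal hfin, h,
          ← ENNReal.ofReal_mul (by positivity)]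
        field_simp

lemma tendsto_rpow_add_sub_rpow_atTop {β h : ℝ} (hβ0 : 0 ≤ β) (hβ1 : β < 1) (hh : 0 ≤ h) :
    Tendsto (fun x : ℝ => (x + h) ^ β - x ^ β) atTop (𝓝 0) := by
  have hlim : Tendsto (fun x : ℝ => β * h * x ^ (β - 1)) atTop (𝓝 0) := by
    simpa using (tendsto_rpow_neg_atTop (by linarith : 0 < 1 - β)).const_mul (β * h)
  refine tendsto_of_tendsto_of_tendsto_of_le_of_le' tendsto_const_nhds (by simpa using hlim)
    ?_ ?_
  · filter_upwards [eventually_ge_atTop 0] with x hx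
    exact sub_nonneg.2 (Real.rpow_le_rpow hx (by linarith) hβ0)
  · filter_upwards [eventually_gt_atTop 0] with x hx
    have hB := rpow_one_add_le_one_add_mul_self
      (by have := div_nonneg hh hx.le; linarith : -1 ≤ h / x) hβ0 hβ1.le
    calc (x + h) ^ β - x ^ β = x ^ β * (1 + h / x) ^ β - x ^ β := by
          rw [← Real.mul_rpow hx.le (by positivity), mul_add, mul_div_cancel₀ _ hx.ne', mul_one]
      _ ≤ x ^ β * (1 + β * (h / x)) - x ^ β := by gcongr
      _ = β * h * x ^ (β - 1) := by
          rw [Real.rpow_sub_one hx.ne']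
          field_simp
          ring

lemma Monotone.eqOn_Ioi_of_ae_eq {α : Type*} [TopologicalSpace α] [LinearOrder α]
    [OrderClosedTopology α] {f g : ℝ → α} (hf : Monotone f) {a : ℝ}
    (hg : ContinuousOn g (Ioi a)) (h : f =ᵐ[volume.restrict (Ioi a)] g) : EqOn f g (Ioi a) := by
  intro x (hx : a < x)
  set E := {t | t ∈ Ioi a → f t = g t}
  have hE : Dense E := Measure.dense_of_ae ((ae_restrict_iff' measurableSet_Ioi).1 h)
  have hclosure : ∀ {U : Set ℝ}, IsOpen U → x ∈ closure U → x ∈ closure (U ∩ E) :=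
    fun hU hxU => closure_minimal (hE.open_subset_closure_inter hU) isClosed_closure hxU
  have hgx (U : Set ℝ) : ContinuousWithinAt g U x :=
    (hg.continuousAt (Ioi_mem_nhds hx)).continuousWithinAt
  refine le_antisymm ?_ ?_
  · refine ContinuousWithinAt.closure_le (f := fun _ => f x)
      (hclosure (U := Ioi x) isOpen_Ioi (by simp)) continuousWithinAt_const (hgx _)
      fun t ht => ?_
    rw [← ht.2 (lt_trans hx ht.1)]
    exact hf (le_of_lt ht.1)
  · refine ContinuousWithinAt.closure_le (g := fun _ => f x)
      (hclosure (U := Ioo a x) isOpen_Ioo (by simp [closure_Ioo hx.ne, hx.le]))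
      (hgx _) continuousWithinAt_const fun t ht => ?_
    rw [← ht.2 ht.1.1]
    exact hf (le_of_lt ht.1.2)

section Probability

variable {Ω : Type*} [MeasurableSpace Ω] {P : Measure Ω} [SFinite P]

lemma lintegral_exp_neg_mul_mul_measure_lt {X : Ω → ℝ} (hX : Measurable X)
    (hX0 : ∀ ω, 0 ≤ X ω) {θ : ℝ} (hθ : 0 < θ) :
    ∫⁻ t in Ioi 0, ENNReal.ofReal (Real.exp (-(θ * t))) * P {ω | X ω < t}
      = ENNReal.ofReal θ⁻¹ * ∫⁻ ω, ENNReal.ofReal (Real.exp (-(θ * X ω))) ∂P := by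
  set F : ℝ × Ω → ℝ≥0∞ :=
    {p | X p.2 < p.1}.indicator fun p => ENNReal.ofReal (Real.exp (-(θ * p.1)))
  have hF : Measurable F :=
    Measurable.indicator (by fun_prop) (measurableSet_lt (by fun_prop) measurable_fst)
  calc ∫⁻ t in Ioi 0, ENNReal.ofReal (Real.exp (-(θ * t))) * P {ω | X ω < t}
      = ∫⁻ t in Ioi 0, ∫⁻ ω, F (t, ω) ∂P :=
        lintegral_congr fun t => (lintegral_indicator_const (hX measurableSet_Iio) _).symm
    _ = ∫⁻ ω, (∫⁻ t in Ioi 0, F (t, ω)) ∂P := lintegral_lintegral_swap hF.aemeasurable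
    _ = ∫⁻ ω, ENNReal.ofReal θ⁻¹ * ENNReal.ofReal (Real.exp (-(θ * X ω))) ∂P := by
        refine lintegral_congr fun ω => ?_
        change ∫⁻ t in Ioi 0,
          (Ioi (X ω)).indicator (fun t => ENNReal.ofReal (Real.exp (-(θ * t)))) t = _
        rw [lintegral_indicator measurableSet_Ioi, Measure.restrict_restrict measurableSet_Ioi,
          Ioi_inter_Ioi, sup_eq_left.2 (hX0 ω), lintegral_exp_neg_mul_Ioi hθ, div_eq_inv_mul,
          ENNReal.ofReal_mul (by positivity)]
    _ = _ := lintegral_const_mul _ (by fun_prop)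

/-- Markov's inequality in the first variable, integrated over `T` in the second. -/
lemma prod_setOf_le_le_of_lintegral_le {X : Type*} [MeasurableSpace X] {ν : Measure X}
    [SFinite ν] {T : Set X} (hT : MeasurableSet T) {F : Ω × X → ℝ≥0∞} (hF : Measurable F)
    {c K : ℝ≥0∞} (hc : c ≠ 0) (hc' : c ≠ ∞) (hK : ∀ x ∈ T, ∫⁻ ω, F (ω, x) ∂P ≤ K) :
    (P.prod ν) {q | q.2 ∈ T ∧ c ≤ F q} ≤ K / c * ν T := by
  rw [Measure.prod_apply_symm (s := {q : Ω × X | q.2 ∈ T ∧ c ≤ F q})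
    ((measurable_snd hT).inter (measurableSet_le measurable_const hF)),
    ← lintegral_indicator_const hT]
  refine lintegral_mono fun x => ?_
  by_cases hx : x ∈ T
  · rw [indicator_of_mem hx]
    exact (measure_mono fun ω hω => hω.2).trans <|
      (meas_ge_le_lintegral_div (hF.comp measurable_prodMk_right).aemeasurable hc hc').trans
        (ENNReal.div_le_div_right (hK x hx) c)
  · simp [hx]

end Probability

section InverseProcess

variable {Ω : Type*} {S : Ω → ℝ → ℝ} {ω : Ω} {a b t : ℝ}

lemma invProc_nonneg (S : Ω → ℝ → ℝ) (ω : Ω) (t : ℝ) : 0 ≤ invProc S ω t :=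
  Real.sInf_nonneg fun _ hu => hu.1

lemma invProc_eq_zero (ht : t ≤ S ω 0) : invProc S ω t = 0 :=
  le_antisymm (csInf_le ⟨0, fun _ hu => hu.1⟩ ⟨le_rfl, ht⟩) (invProc_nonneg S ω t)

lemma le_apply_invProc
    (hS : ContinuousWithinAt (S ω) (Ici (invProc S ω t)) (invProc S ω t))
    (hne : {u | 0 ≤ u ∧ t ≤ S ω u}.Nonempty) : t ≤ S ω (invProc S ω t) := by
  have hbdd : BddBelow {u | 0 ≤ u ∧ t ≤ S ω u} := ⟨0, fun _ hu => hu.1⟩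
  have := (hS.mono fun u hu => csInf_le hbdd hu).mem_closure_image (csInf_mem_closure hne hbdd)
  exact closure_minimal (image_subset_iff.2 fun u hu => hu.2) isClosed_Ici this

lemma Ico_invProc_subset (hmono : Monotone (S ω))
    (hrc : ∀ u, ContinuousWithinAt (S ω) (Ici u) u) (hab : a ≤ b) :
    Ico (invProc S ω a) (invProc S ω b) ⊆ S ω ⁻¹' Ico a b := by
  rintro u ⟨hau, hub⟩
  have hu : 0 ≤ u := (invProc_nonneg S ω a).trans hau
  -- otherwise `invProc S ω b = sInf ∅ = 0 ≤ u`
  have hne : {u | 0 ≤ u ∧ b ≤ S ω u}.Nonempty := by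
    by_contra hemp
    rw [not_nonempty_iff_eq_empty] at hemp
    rw [invProc, hemp, Real.sInf_empty] at hub
    linarith
  have hbdd : BddBelow {u | 0 ≤ u ∧ b ≤ S ω u} := ⟨0, fun _ hv => hv.1⟩
  refine ⟨?_, lt_of_not_ge fun hbu => (csInf_le hbdd ⟨hu, hbu⟩).not_gt hub⟩
  exact (le_apply_invProc (hrc _) (hne.mono fun v hv => ⟨hv.1, hab.trans hv.2⟩)).trans
    (hmono hau)

noncomputable def sojournTime (S : Ω → ℝ → ℝ) (ω : Ω) (a b : ℝ) : ℝ≥0∞ :=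
  volume (S ω ⁻¹' Ico a b)

lemma ofReal_invProc_sub_le_sojournTime (hmono : Monotone (S ω))
    (hrc : ∀ u, ContinuousWithinAt (S ω) (Ici u) u) (hab : a ≤ b) :
    ENNReal.ofReal (invProc S ω b - invProc S ω a) ≤ sojournTime S ω a b := by
  rw [← Real.volume_Ico]
  exact measure_mono (Ico_invProc_subset hmono hrc hab)

end InverseProcess

section Subordinator

variable {Ω : Type*} [MeasurableSpace Ω] {P : Measure Ω} {β : ℝ} {S : Ω → ℝ → ℝ}

/-- The renewal function of `S`; it is `E[M(t)]` for the inverse `M = invProc S`. -/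
noncomputable def renewalFun (P : Measure Ω) (S : Ω → ℝ → ℝ) (t : ℝ) : ℝ≥0∞ :=
  ∫⁻ u in Ioi 0, P {ω | S ω u < t}

lemma renewalFun_mono : Monotone (renewalFun P S) := fun _ _ hst =>
  lintegral_mono fun _ => measure_mono fun _ hω => lt_of_lt_of_le hω hst

namespace IsStableSubordinator

lemma nonneg (hS : IsStableSubordinator β P S) (ω : Ω) {u : ℝ} (hu : 0 ≤ u) : 0 ≤ S ω u :=
  hS.zero ω ▸ hS.mono ω hu

/-- `S u < t` iff `S q < t` for some rational `q > u`, by right-continuity and monotonicity. -/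
lemma measurable_uncurry (hS : IsStableSubordinator β P S) :
    Measurable fun p : Ω × ℝ => S p.1 p.2 := by
  refine measurable_of_Iio fun t => ?_
  have : (fun p : Ω × ℝ => S p.1 p.2) ⁻¹' Iio t
      = ⋃ q : ℚ, {ω | S ω q < t} ×ˢ Iio (q : ℝ) := by
    ext ⟨ω, u⟩
    simp only [mem_preimage, mem_Iio, mem_iUnion, mem_prod]
    refine ⟨fun h => ?_, fun ⟨q, hq, huq⟩ => (hS.mono ω huq.le).trans_lt hq⟩
    obtain ⟨b, hub, hb⟩ := mem_nhdsGT_iff_exists_Ioo_subset.1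
      (nhdsWithin_mono _ Ioi_subset_Ici_self (hS.rightCont ω u (Iio_mem_nhds h)))
    obtain ⟨q, huq, hqb⟩ := exists_rat_btwn (mem_Ioi.1 hub)
    exact ⟨q, hb ⟨huq, hqb⟩, huq⟩
  rw [this]
  exact .iUnion fun q => ((hS.meas q) measurableSet_Iio).prod measurableSet_Iio

lemma measurable_sojournTime (hS : IsStableSubordinator β P S) {X : Type*} [MeasurableSpace X]
    {a b : X → ℝ} (ha : Measurable a) (hb : Measurable b) :
    Measurable fun p : Ω × X => sojournTime S p.1 (a p.2) (b p.2) := by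
  have hS' : Measurable fun q : (Ω × X) × ℝ => S q.1.1 q.2 :=
    hS.measurable_uncurry.comp ((measurable_fst.comp measurable_fst).prodMk measurable_snd)
  exact measurable_measure_prodMk_left
    ((measurableSet_le (ha.comp (measurable_snd.comp measurable_fst)) hS').inter
      (measurableSet_lt hS' (hb.comp (measurable_snd.comp measurable_fst))))

variable [IsFiniteMeasure P]

lemma measurable_measure_lt (hS : IsStableSubordinator β P S) :
    Measurable fun p : ℝ × ℝ => P {ω | S ω p.2 < p.1} :=
  measurable_measure_prodMk_left (measurableSet_lt
    (hS.measurable_uncurry.comp (measurable_snd.prodMk (measurable_snd.comp measurable_fst)))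
    (measurable_fst.comp measurable_fst))

lemma lintegral_exp_neg_mul (hS : IsStableSubordinator β P S) {θ u : ℝ}
    (hθ : 0 ≤ θ) (hu : 0 ≤ u) :
    ∫⁻ ω, ENNReal.ofReal (Real.exp (-(θ * S ω u))) ∂P
      = ENNReal.ofReal (Real.exp (-(θ ^ β * u))) := by
  have hL := hS.laplace θ hθ 0 u le_rfl hu
  simp only [hS.zero, sub_zero, neg_mul] at hL
  rw [mul_comm, ← hL, ofReal_integral_eq_lintegral_ofReal _
    (ae_of_all _ fun ω => (Real.exp_pos _).le)]
  refine .of_bound ((hS.meas u).const_mul θ).neg.exp.aestronglyMeasurable 1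
    (ae_of_all _ fun ω => ?_)
  rw [Real.norm_of_nonneg (Real.exp_pos _).le, Real.exp_le_one_iff, neg_nonpos]
  exact mul_nonneg hθ (hS.nonneg ω hu)

lemma lintegral_exp_neg_mul_renewalFun (hS : IsStableSubordinator β P S) {θ : ℝ} (hθ : 0 < θ) :
    ∫⁻ t in Ioi 0, ENNReal.ofReal (Real.exp (-(θ * t))) * renewalFun P S t
      = ENNReal.ofReal ((1 / θ) ^ (β + 1)) := by
  have hθβ : 0 < θ ^ β := Real.rpow_pos_of_pos hθ β
  calc ∫⁻ t in Ioi 0, ENNReal.ofReal (Real.exp (-(θ * t))) * renewalFun P S t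
      = ∫⁻ t in Ioi 0, ∫⁻ u in Ioi 0,
          ENNReal.ofReal (Real.exp (-(θ * t))) * P {ω | S ω u < t} := by
        refine lintegral_congr fun t => (lintegral_const_mul _ ?_).symm
        exact hS.measurable_measure_lt.comp (measurable_const.prodMk measurable_id)
    _ = ∫⁻ u in Ioi 0, ∫⁻ t in Ioi 0,
          ENNReal.ofReal (Real.exp (-(θ * t))) * P {ω | S ω u < t} :=
        lintegral_lintegral_swap (((by fun_prop : Measurable fun t : ℝ =>
          ENNReal.ofReal (Real.exp (-(θ * t)))).comp measurable_fst).mul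
            hS.measurable_measure_lt).aemeasurable
    _ = ∫⁻ u in Ioi 0, ENNReal.ofReal θ⁻¹ * ENNReal.ofReal (Real.exp (-(θ ^ β * u))) :=
        setLIntegral_congr_fun measurableSet_Ioi fun u (hu : 0 < u) => by
          rw [lintegral_exp_neg_mul_mul_measure_lt (hS.meas u) (fun ω => hS.nonneg ω hu.le) hθ,
            hS.lintegral_exp_neg_mul hθ.le hu.le]
    _ = ENNReal.ofReal ((1 / θ) ^ (β + 1)) := by
        rw [lintegral_const_mul _ (by fun_prop), lintegral_exp_neg_mul_Ioi hθβ,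
          ← ENNReal.ofReal_mul (by positivity), Real.rpow_add_one (by positivity),
          Real.div_rpow zero_le_one hθ.le]
        simp [mul_comm]

/-- Both sides have Laplace transform `(1 / θ) ^ (β + 1)`. -/
lemma renewalFun_eq (hS : IsStableSubordinator β P S) (hβ : 0 < β) {t : ℝ} (ht : 0 < t) :
    renewalFun P S t = ENNReal.ofReal (t ^ β / Real.Gamma (β + 1)) := by
  have htilt : ∀ s : ℝ, ∀ F : ℝ → ℝ≥0∞,
      ∫⁻ t in Ioi 0, ENNReal.ofReal (Real.exp (s * t)) * (ENNReal.ofReal (Real.exp (-t)) * F t)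
        = ∫⁻ t in Ioi 0, ENNReal.ofReal (Real.exp (-((1 - s) * t))) * F t := fun s F =>
    lintegral_congr fun t => by
      rw [← mul_assoc, ← ENNReal.ofReal_mul (Real.exp_pos _).le, ← Real.exp_add]
      ring_nf
  have hae : renewalFun P S =ᵐ[volume.restrict (Ioi 0)]
      fun t => ENNReal.ofReal (t ^ β / Real.Gamma (β + 1)) := by
    have := ae_eq_of_lintegral_exp_mul_eq (μ := volume.restrict (Ioi 0))
      (f := fun t => ENNReal.ofReal (Real.exp (-t)) * renewalFun P S t)
      (g := fun t => ENNReal.ofReal (Real.exp (-t)) *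
        ENNReal.ofReal (t ^ β / Real.Gamma (β + 1)))
      ((by fun_prop : Measurable fun t : ℝ => ENNReal.ofReal (Real.exp (-t))).mul
        renewalFun_mono.measurable) (by fun_prop) neg_one_lt_zero one_pos
      (fun s hs => by
        rw [htilt, hS.lintegral_exp_neg_mul_renewalFun (by linarith [hs.2])]
        exact ENNReal.ofReal_ne_top)
      (fun s hs => by
        rw [htilt, htilt, hS.lintegral_exp_neg_mul_renewalFun (by linarith [hs.2]),
          lintegral_exp_neg_mul_mul_rpow_div_Gamma (by linarith [hs.2]) (by linarith)])
    filter_upwards [this] with t ht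
    exact (ENNReal.mul_right_inj (by simp [Real.exp_pos]) ENNReal.ofReal_ne_top).1 ht
  exact renewalFun_mono.eqOn_Ioi_of_ae_eq (ENNReal.continuous_ofReal.comp
    ((Real.continuous_rpow_const hβ.le).div_const _)).continuousOn hae ht

lemma lintegral_sojournTime_eq_sub (hS : IsStableSubordinator β P S) {a b : ℝ} (ha : 0 < a)
    (hab : a ≤ b) (hfin : renewalFun P S a ≠ ∞) :
    ∫⁻ ω, sojournTime S ω a b ∂P = renewalFun P S b - renewalFun P S a := by
  have hE : MeasurableSet {p : Ω × ℝ | S p.1 p.2 ∈ Ico a b} :=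
    measurableSet_Ico.preimage hS.measurable_uncurry
  -- `S u ≤ 0 < a` for `u ≤ 0`
  have hsupp : (Function.support fun u => P {ω | S ω u ∈ Ico a b}) ⊆ Ioi 0 := fun u hu => by
    by_contra! hu0
    refine hu (measure_mono_null (fun ω hω => ?_) measure_empty)
    exact (hS.zero ω ▸ hS.mono ω (not_lt.1 hu0)).not_gt (ha.trans_le hω.1)
  calc ∫⁻ ω, sojournTime S ω a b ∂P
      = ∫⁻ u, P {ω | S ω u ∈ Ico a b} := by
        change ∫⁻ ω, volume (Prod.mk ω ⁻¹' {p : Ω × ℝ | S p.1 p.2 ∈ Ico a b}) ∂P = _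
        rw [← Measure.prod_apply hE, Measure.prod_apply_symm hE]
        rfl
    _ = ∫⁻ u in Ioi 0, (P {ω | S ω u < b} - P {ω | S ω u < a}) := by
        rw [← setLIntegral_eq_of_support_subset hsupp]
        refine setLIntegral_congr_fun measurableSet_Ioi fun u _ => ?_
        rw [← measure_sdiff (s₁ := {ω | S ω u < b}) (s₂ := {ω | S ω u < a})
          (fun ω (hω : S ω u < a) => hω.trans_le hab)
          ((hS.meas u) measurableSet_Iio).nullMeasurableSet (measure_ne_top P _)]
        congr 1
        ext ω
        simp [and_comm]
    _ = renewalFun P S b - renewalFun P S a :=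
        lintegral_sub (f := fun u => P {ω | S ω u < b})
          (hS.measurable_measure_lt.comp (measurable_const.prodMk measurable_id)) hfin
          (ae_of_all _ fun u => measure_mono fun ω hω => lt_of_lt_of_le hω hab)

lemma lintegral_sojournTime (hS : IsStableSubordinator β P S) (hβ : 0 < β) {a b : ℝ}
    (ha : 0 < a) (hab : a ≤ b) :
    ∫⁻ ω, sojournTime S ω a b ∂P = ENNReal.ofReal ((b ^ β - a ^ β) / Real.Gamma (β + 1)) := by
  rw [hS.lintegral_sojournTime_eq_sub ha hab (by simp [hS.renewalFun_eq hβ ha]),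
    hS.renewalFun_eq hβ (ha.trans_le hab), hS.renewalFun_eq hβ ha,
    ← ENNReal.ofReal_sub _ (by positivity), sub_div]

lemma lintegral_sojournTime_le (hS : IsStableSubordinator β P S) (hβ : 0 < β) {c x : ℝ}
    (hc : 1 ≤ c) (hx : x ∈ Ico 0 1) :
    ∫⁻ ω, sojournTime S ω (c - x) (c + 1 - x) ∂P
      ≤ ENNReal.ofReal (((c + 1) ^ β - (c - 1) ^ β) / Real.Gamma (β + 1)) := by
  rw [hS.lintegral_sojournTime hβ (by linarith [hx.2]) (by linarith)]
  refine ENNReal.ofReal_le_ofReal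
    (div_le_div_of_nonneg_right ?_ (Real.Gamma_pos_of_pos (by linarith)).le)
  gcongr <;> linarith [hx.1, hx.2]

end IsStableSubordinator

instance (β : ℝ) : SFinite (nuMeasure β) := by
  unfold nuMeasure
  infer_instance

lemma nuMeasure_Iio_zero (β : ℝ) : nuMeasure β (Iio 0) = 0 := by
  rw [nuMeasure, withDensity_apply _ measurableSet_Iio,
    Measure.restrict_restrict measurableSet_Iio, Iio_inter_Ici, Ico_self,
    Measure.restrict_empty, lintegral_zero_measure]

lemma nuMeasure_Ico_zero_one_ne_top (hβ : β < 1) : nuMeasure β (Ico 0 1) ≠ ∞ := by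
  rw [nuMeasure, withDensity_apply _ measurableSet_Ico,
    Measure.restrict_restrict measurableSet_Ico, inter_eq_left.2 Ico_subset_Ici_self,
    setLIntegral_congr Ioo_ae_eq_Ico.symm]
  refine (Integrable.lintegral_lt_top ?_).ne
  exact ((intervalIntegrable_iff_integrableOn_Ioo_of_le zero_le_one).1
    (intervalIntegral.intervalIntegrable_rpow' (by linarith))).const_mul _

lemma setOf_mixing_subset (hS : IsStableSubordinator β P S) {ε c : ℝ} (hε : 0 < ε)
    (hc : 1 ≤ c) :
    {q : Ω × ℝ | ε < invProc S q.1 (max (1 - q.2) 0) ∧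
        ε < invProc S q.1 (max (c + 1 - q.2) 0) - invProc S q.1 (max (c - q.2) 0)}
      ⊆ univ ×ˢ Iio 0 ∪
        {q | q.2 ∈ Ico 0 1 ∧ ENNReal.ofReal ε ≤ sojournTime S q.1 (c - q.2) (c + 1 - q.2)} := by
  rintro ⟨ω, x⟩ ⟨h1, h2⟩
  rcases lt_or_ge x 0 with hx0 | hx0
  · exact Or.inl ⟨mem_univ ω, hx0⟩
  have hx1 : x < 1 := by
    by_contra! hx1
    rw [max_eq_right (by linarith), invProc_eq_zero (hS.zero ω).ge] at h1
    linarith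
  rw [max_eq_left (by linarith), max_eq_left (by linarith)] at h2
  exact Or.inr ⟨⟨hx0, hx1⟩, (ENNReal.ofReal_le_ofReal h2.le).trans
    (ofReal_invProc_sub_le_sojournTime (hS.mono ω) (hS.rightCont ω) (by linarith))⟩

lemma measure_setOf_mixing_le [IsFiniteMeasure P] (hS : IsStableSubordinator β P S)
    (hβ : 0 < β) {ε c : ℝ} (hε : 0 < ε) (hc : 1 ≤ c) :
    (P.prod (nuMeasure β)) {q : Ω × ℝ | ε < invProc S q.1 (max (1 - q.2) 0) ∧
        ε < invProc S q.1 (max (c + 1 - q.2) 0) - invProc S q.1 (max (c - q.2) 0)}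
      ≤ ENNReal.ofReal (((c + 1) ^ β - (c - 1) ^ β) / Real.Gamma (β + 1)) / ENNReal.ofReal ε
        * nuMeasure β (Ico 0 1) :=
  calc _ ≤ _ := measure_mono (setOf_mixing_subset hS hε hc)
    _ ≤ _ := measure_union_le _ _
    _ ≤ 0 + _ := by
      gcongr
      · rw [Measure.prod_prod, nuMeasure_Iio_zero, mul_zero]
      · exact prod_setOf_le_le_of_lintegral_le measurableSet_Ico
          (hS.measurable_sojournTime (by fun_prop) (by fun_prop)) (by simpa using hε)
          ENNReal.ofReal_ne_top fun x hx => hS.lintegral_sojournTime_le hβ hc hx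
    _ = _ := zero_add _

end Subordinator

/-- The mixing property of the increments of the β-Mittag-Leffler fractional
SαS motion: for every `ε > 0`,
`(P' × ν){ (ω,x) : M_β((1-x)_+) > ε, M_β((n+1-x)_+) - M_β((n-x)_+) > ε } → 0`. -/
theorem mittagLeffler_increments_mixing_condition
    {Ω : Type*} [MeasurableSpace Ω] (P : Measure Ω) [IsProbabilityMeasure P]
    (β : ℝ) (hβ0 : 0 < β) (hβ1 : β < 1)
    (S : Ω → ℝ → ℝ) (hS : IsStableSubordinator β P S)
    (ε : ℝ) (hε : 0 < ε) :
    Tendsto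
      (fun n : ℕ =>
        (P.prod (nuMeasure β))
          {q : Ω × ℝ |
            ε < invProc S q.1 (max (1 - q.2) 0) ∧
            ε < invProc S q.1 (max ((n : ℝ) + 1 - q.2) 0)
                  - invProc S q.1 (max ((n : ℝ) - q.2) 0)})
      atTop (nhds 0) := by
  have hdecay : Tendsto (fun n : ℕ => ((n : ℝ) + 1) ^ β - ((n : ℝ) - 1) ^ β) atTop (𝓝 0) := by
    refine ((tendsto_rpow_add_sub_rpow_atTop hβ0.le hβ1 zero_le_two).comp
      (tendsto_atTop_add_const_right _ (-1) tendsto_natCast_atTop_atTop)).congr fun n => ?_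
    simp only [Function.comp_apply]
    ring_nf
  have hlim := ENNReal.Tendsto.mul_const (ENNReal.Tendsto.div_const
    (ENNReal.tendsto_ofReal (hdecay.div_const (Real.Gamma (β + 1))))
    (Or.inr (by simpa using hε : ENNReal.ofReal ε ≠ 0)))
    (Or.inr (nuMeasure_Ico_zero_one_ne_top hβ1))
  rw [zero_div, ENNReal.ofReal_zero, ENNReal.zero_div, zero_mul] at hlim
  exact tendsto_of_tendsto_of_tendsto_of_le_of_le' tendsto_const_nhds hlim
    (Eventually.of_forall fun _ => zero_le) (eventually_atTop.2
      ⟨1, fun n hn => measure_setOf_mixing_le hS hβ0 hε (c := n) (by exact_mod_cast hn)⟩)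
end

section
/- Let T be an ergodic conservative measure-preserving map of an infinite σ-finite measure space (E,ℰ,μ), let A be a Darling–Kac set for T with normalizing sequence (a_n) satisfying a_n/n → 0, and let f:E→ℝ be a measurable function vanishing outside A. Then for every ε>0, (1/n) Σ_{k=1}^n μ( { x∈E : |f(x)|>ε and |f(T^k x)|>ε } ) → 0 as n→∞. -/
open MeasureTheory ProbabilityTheory Filter
open scoped ENNReal

/-- The dual operator `T̂` acting on nonnegative (ℝ≥0∞-valued) functions:
`T̂ f` is the Radon–Nikodym derivative with respect to `μ` of the pushforward
under `T` of the measure with density `f` with respect to `μ`. -/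
noncomputable def dualPos {E : Type*} [MeasurableSpace E] (T : E → E) (μ : Measure E)
    (f : E → ℝ≥0∞) : E → ℝ≥0∞ :=
  Measure.rnDeriv (Measure.map T (μ.withDensity f)) μ

/-- The dual operator `T̂` acting on real-valued functions, extended from
nonnegative functions by linearity. -/
noncomputable def dualOp {E : Type*} [MeasurableSpace E] (T : E → E) (μ : Measure E)
    (f : E → ℝ) : E → ℝ :=
  fun x => (dualPos T μ (fun y => ENNReal.ofReal (f y)) x).toReal
    - (dualPos T μ (fun y => ENNReal.ofReal (-f y)) x).toReal

/-- `T` is pointwise dual ergodic with normalizing sequence `a`: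
`a_n → ∞` and `(1/a_n) Σ_{k=1}^n T̂^k f → ∫ f dμ` μ-a.e. for every `f ∈ L¹(μ)`. -/
def PointwiseDualErgodic {E : Type*} [MeasurableSpace E] (T : E → E) (μ : Measure E)
    (a : ℕ → ℝ) : Prop :=
  Filter.Tendsto a Filter.atTop Filter.atTop ∧
  ∀ f : E → ℝ, Integrable f μ →
    ∀ᵐ x ∂μ, Filter.Tendsto
      (fun n : ℕ => (a n)⁻¹ * ∑ k ∈ Finset.Icc 1 n, (dualOp T μ)^[k] f x)
      Filter.atTop (nhds (∫ y, f y ∂μ))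

/-- A sequence of positive reals is regularly varying with exponent `β`. -/
def RegularlyVarying (a : ℕ → ℝ) (β : ℝ) : Prop :=
  (∀ n : ℕ, 1 ≤ n → 0 < a n) ∧
  ∀ lam : ℝ, 0 < lam →
    Filter.Tendsto (fun n : ℕ => a ⌈lam * (n : ℝ)⌉₊ / a n) Filter.atTop (nhds (lam ^ β))

/-- `A` is a Darling–Kac set for `T` with normalizing sequence `a`:
`0 < μ(A) < ∞` and `(1/a_n) Σ_{k=1}^n T̂^k 1_A → μ(A)` uniformly on a measurable
subset of `A` of full measure in `A`. -/
def DarlingKacSet {E : Type*} [MeasurableSpace E] (T : E → E) (μ : Measure E)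
    (a : ℕ → ℝ) (A : Set E) : Prop :=
  MeasurableSet A ∧ 0 < μ A ∧ μ A < ⊤ ∧
  Filter.Tendsto a Filter.atTop Filter.atTop ∧
  ∃ B ⊆ A, MeasurableSet B ∧ μ B = μ A ∧
    TendstoUniformlyOn
      (fun (n : ℕ) (x : E) => (a n)⁻¹ * ∑ k ∈ Finset.Icc 1 n, (dualOp T μ)^[k] (A.indicator 1) x)
      (fun _ => (μ A).toReal) Filter.atTop B

/-- `A` is a uniform set for the nonnegative integrable function `g`:
`(1/a_n) Σ_{k=1}^n T̂^k g → ∫ g dμ` uniformly on a measurable subset of `A`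
of full measure in `A`. -/
def UniformSet {E : Type*} [MeasurableSpace E] (T : E → E) (μ : Measure E)
    (a : ℕ → ℝ) (A : Set E) (g : E → ℝ) : Prop :=
  ∃ B ⊆ A, MeasurableSet B ∧ μ B = μ A ∧
    TendstoUniformlyOn
      (fun (n : ℕ) (x : E) => (a n)⁻¹ * ∑ k ∈ Finset.Icc 1 n, (dualOp T μ)^[k] g x)
      (fun _ => ∫ y, g y ∂μ) Filter.atTop B

/-- The first entrance time `φ(x) = inf{n ≥ 1 : T^n x ∈ A}`, with value `⊤`
if the orbit of `x` never enters `A`. -/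
noncomputable def firstEntrance {E : Type*} (T : E → E) (A : Set E) (x : E) : ℕ∞ :=
  sInf {n : ℕ∞ | ∃ m : ℕ, n = m ∧ 1 ≤ m ∧ T^[m] x ∈ A}

/-- The sequence of sets `A_0 = A`, `A_k = Aᶜ ∩ {φ = k}` for `k ≥ 1`. -/
noncomputable def entranceSets {E : Type*} (T : E → E) (A : Set E) : ℕ → Set E
  | 0 => A
  | (k + 1) => Aᶜ ∩ {x | firstEntrance T A x = ((k + 1 : ℕ) : ℕ∞)}

/-- Condition (strongDK): there is a measurable nonnegative `K` with
`T̂^n 1_{A_n} / μ(A_n) → K` uniformly on a measurable subset of `A` of full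
measure in `A`. -/
def StrongDK {E : Type*} [MeasurableSpace E] (T : E → E) (μ : Measure E)
    (A : Set E) : Prop :=
  ∃ K : E → ℝ, Measurable K ∧ (∀ x, 0 ≤ K x) ∧
    ∃ B ⊆ A, MeasurableSet B ∧ μ B = μ A ∧
      TendstoUniformlyOn
        (fun (n : ℕ) (x : E) =>
          (dualOp T μ)^[n] ((entranceSets T A n).indicator 1) x /
            (μ (entranceSets T A n)).toReal)
        K Filter.atTop B

/-- The ergodic sums `S_n(f) = Σ_{k=1}^n f ∘ T^k`. -/
noncomputable def ergSum {E : Type*} (T : E → E) (f : E → ℝ) (n : ℕ) (x : E) : ℝ :=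
  ∑ k ∈ Finset.Icc 1 n, f (T^[k] x)

/-- The wandering rate `w_n = μ(∪_{k=0}^{n-1} T^{-k} A)`. -/
noncomputable def wanderingRate {E : Type*} [MeasurableSpace E] (T : E → E)
    (μ : Measure E) (A : Set E) (n : ℕ) : ℝ≥0∞ :=
  μ (⋃ k ∈ Finset.range n, T^[k] ⁻¹' A)

/-!
With `C = {|f| > ε} ⊆ A`, duality for the transfer operator gives
`μ(C ∩ T⁻ᵏ C) ≤ μ(A ∩ T⁻ᵏ C) = ∫_C T̂ᵏ 1_A dμ`. The Darling–Kac property bounds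
`Σ_{k ≤ n} T̂ᵏ 1_A` by `a_n (μ(A) + 1)` almost everywhere on `A` for large `n`, so the
`n`-th average is `O(a_n / n)`, which tends to `0`.
-/

section DualOperator

variable {E : Type*} [MeasurableSpace E] {T : E → E} {μ : Measure E}

theorem dualPos_congr_ae {g₁ g₂ : E → ℝ≥0∞} (h : g₁ =ᵐ[μ] g₂) :
    dualPos T μ g₁ = dualPos T μ g₂ := by
  rw [dualPos, dualPos, withDensity_congr_ae h]

theorem dualPos_zero_ae_eq : dualPos T μ 0 =ᵐ[μ] 0 := by
  rw [dualPos, withDensity_zero, Measure.map_zero]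
  exact μ.rnDeriv_zero

theorem measurable_iterate_dualPos {g : E → ℝ≥0∞} (hg : Measurable g) (k : ℕ) :
    Measurable ((dualPos T μ)^[k] g) := by
  cases k with
  | zero => exact hg
  | succ k =>
    rw [Function.iterate_succ_apply']
    exact Measure.measurable_rnDeriv _ _

theorem setLIntegral_dualPos [SigmaFinite μ] (hT : MeasurePreserving T μ μ)
    {g : E → ℝ≥0∞} {S : Set E} (hS : MeasurableSet S) :
    ∫⁻ x in S, dualPos T μ g x ∂μ = ∫⁻ x in T ⁻¹' S, g x ∂μ := by
  have hmap : ∀ {s : Set E}, MeasurableSet s →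
      Measure.map T (μ.withDensity g) s = ∫⁻ x in T ⁻¹' s, g x ∂μ := fun hs => by
    rw [Measure.map_apply hT.measurable hs, withDensity_apply _ (hT.measurable hs)]
  have hac : Measure.map T (μ.withDensity g) ≪ μ := by
    refine Measure.AbsolutelyContinuous.mk fun s hs hμs => ?_
    rw [Measure.map_apply hT.measurable hs]
    exact withDensity_absolutelyContinuous μ g (by rwa [hT.measure_preimage hs.nullMeasurableSet])
  -- no finiteness of `∫ g` is needed: the pushforward is s-finite, so it has a Lebesgue
  -- decomposition with respect to the σ-finite `μ`
  rw [dualPos, Measure.setLIntegral_rnDeriv' hac hS, hmap hS]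

theorem setLIntegral_iterate_dualPos [SigmaFinite μ] (hT : MeasurePreserving T μ μ)
    (g : E → ℝ≥0∞) (k : ℕ) {S : Set E} (hS : MeasurableSet S) :
    ∫⁻ x in S, (dualPos T μ)^[k] g x ∂μ = ∫⁻ x in T^[k] ⁻¹' S, g x ∂μ := by
  induction k generalizing S with
  | zero => rfl
  | succ k ih =>
    rw [Function.iterate_succ_apply', setLIntegral_dualPos hT hS,
      ih (hT.measurable hS), Function.iterate_succ', Set.preimage_comp]

theorem lintegral_iterate_dualPos [SigmaFinite μ] (hT : MeasurePreserving T μ μ)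
    (g : E → ℝ≥0∞) (k : ℕ) :
    ∫⁻ x, (dualPos T μ)^[k] g x ∂μ = ∫⁻ x, g x ∂μ := by
  rw [← setLIntegral_univ, setLIntegral_iterate_dualPos hT g k MeasurableSet.univ,
    Set.preimage_univ, setLIntegral_univ]

theorem dualOp_ae_eq_toReal_dualPos {h : E → ℝ} {G : E → ℝ≥0∞}
    (hh : h =ᵐ[μ] fun x => (G x).toReal) (hG : ∀ᵐ x ∂μ, G x < ⊤) :
    dualOp T μ h =ᵐ[μ] fun x => (dualPos T μ G x).toReal := by
  have hpos : (fun x => ENNReal.ofReal (h x)) =ᵐ[μ] G := by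
    filter_upwards [hh, hG] with x hx hGx
    rw [hx, ENNReal.ofReal_toReal hGx.ne]
  have hneg : (fun x => ENNReal.ofReal (-h x)) =ᵐ[μ] 0 := by
    filter_upwards [hh] with x hx
    simp [hx]
  have hzero : dualPos T μ (fun x => ENNReal.ofReal (-h x)) =ᵐ[μ] 0 := by
    rw [dualPos_congr_ae hneg]
    exact dualPos_zero_ae_eq
  filter_upwards [hzero] with x hx
  simp only [dualOp, dualPos_congr_ae hpos, hx, Pi.zero_apply, ENNReal.toReal_zero, sub_zero]

theorem iterate_dualOp_ae_eq_toReal [SigmaFinite μ] (hT : MeasurePreserving T μ μ)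
    {g : E → ℝ≥0∞} (hgm : Measurable g) (hg : ∫⁻ x, g x ∂μ ≠ ⊤) (k : ℕ) :
    (dualOp T μ)^[k] (fun x => (g x).toReal) =ᵐ[μ]
      fun x => ((dualPos T μ)^[k] g x).toReal := by
  induction k with
  | zero => rfl
  | succ k ih =>
    rw [Function.iterate_succ_apply', Function.iterate_succ_apply']
    refine dualOp_ae_eq_toReal_dualPos ih (ae_lt_top (measurable_iterate_dualPos hgm k) ?_)
    rwa [lintegral_iterate_dualPos hT]

end DualOperator

section DarlingKac

variable {E : Type*} [MeasurableSpace E] {T : E → E} {μ : Measure E} {A : Set E}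

theorem setLIntegral_iterate_dualPos_indicator_one [SigmaFinite μ]
    (hT : MeasurePreserving T μ μ) (hA : MeasurableSet A) (k : ℕ) {S : Set E}
    (hS : MeasurableSet S) :
    ∫⁻ x in S, (dualPos T μ)^[k] (A.indicator 1) x ∂μ = μ (A ∩ T^[k] ⁻¹' S) := by
  rw [setLIntegral_iterate_dualPos hT _ k hS, lintegral_indicator_one hA,
    Measure.restrict_apply hA]

theorem ae_iterate_dualPos_indicator_one_lt_top [SigmaFinite μ]
    (hT : MeasurePreserving T μ μ) (hA : MeasurableSet A) (hAfin : μ A ≠ ⊤) (k : ℕ) :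
    ∀ᵐ x ∂μ, (dualPos T μ)^[k] (A.indicator 1) x < ⊤ := by
  refine ae_lt_top (measurable_iterate_dualPos (measurable_one.indicator hA) k) ?_
  rwa [lintegral_iterate_dualPos hT, lintegral_indicator_one hA]

theorem iterate_dualOp_indicator_one_ae_eq [SigmaFinite μ]
    (hT : MeasurePreserving T μ μ) (hA : MeasurableSet A) (hAfin : μ A ≠ ⊤) (k : ℕ) :
    (dualOp T μ)^[k] (A.indicator 1) =ᵐ[μ]
      fun x => ((dualPos T μ)^[k] (A.indicator 1) x).toReal := by
  have hind : A.indicator (1 : E → ℝ) =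
      fun x => (A.indicator (1 : E → ℝ≥0∞) x).toReal := by
    funext x
    by_cases hx : x ∈ A <;> simp [hx]
  rw [hind]
  refine iterate_dualOp_ae_eq_toReal hT (measurable_one.indicator hA) ?_ k
  rwa [lintegral_indicator_one hA]

variable {a : ℕ → ℝ}

theorem DarlingKacSet.eventually_ae_sum_iterate_dualPos_le [SigmaFinite μ]
    (hT : MeasurePreserving T μ μ) (hDK : DarlingKacSet T μ a A) :
    ∀ᶠ n in atTop, ∀ᵐ x ∂μ.restrict A,
      ∑ k ∈ Finset.Icc 1 n, (dualPos T μ)^[k] (A.indicator 1) x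
        ≤ ENNReal.ofReal (a n * ((μ A).toReal + 1)) := by
  obtain ⟨hA, -, hAfin, hatop, B, hBA, hB, hμB, hunif⟩ := hDK
  have hB_ae : ∀ᵐ x ∂μ.restrict A, x ∈ B := by
    rw [← Measure.restrict_congr_set
      (ae_eq_of_subset_of_measure_ge hBA hμB.ge hB.nullMeasurableSet (hμB ▸ hAfin.ne))]
    exact ae_restrict_mem hB
  filter_upwards [Metric.tendstoUniformlyOn_iff.1 hunif 1 one_pos,
    hatop.eventually_ge_atTop 1] with n hclose ha
  have hterms : ∀ᵐ x ∂μ, ∀ k ∈ Finset.Icc 1 n,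
      (dualOp T μ)^[k] (A.indicator 1) x = ((dualPos T μ)^[k] (A.indicator 1) x).toReal ∧
        (dualPos T μ)^[k] (A.indicator 1) x < ⊤ :=
    (eventually_all_finset _).2 fun k _ =>
      (iterate_dualOp_indicator_one_ae_eq hT hA hAfin.ne k).and
        (ae_iterate_dualPos_indicator_one_lt_top hT hA hAfin.ne k)
  filter_upwards [hB_ae, ae_restrict_of_ae hterms] with x hxB hx
  have hapos : 0 < a n := by linarith
  rw [ENNReal.le_ofReal_iff_toReal_le (ENNReal.sum_ne_top.2 fun k hk => (hx k hk).2.ne)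
      (mul_nonneg hapos.le (by positivity)),
    ENNReal.toReal_sum fun k hk => (hx k hk).2.ne, ← Finset.sum_congr rfl fun k hk => (hx k hk).1]
  have hdist := hclose x hxB
  rw [Real.dist_eq, abs_lt] at hdist
  calc ∑ k ∈ Finset.Icc 1 n, (dualOp T μ)^[k] (A.indicator 1) x
      = a n * ((a n)⁻¹ * ∑ k ∈ Finset.Icc 1 n, (dualOp T μ)^[k] (A.indicator 1) x) := by
        field_simp
    _ ≤ a n * ((μ A).toReal + 1) := by gcongr; linarith [hdist.1]

theorem DarlingKacSet.eventually_sum_measure_inter_preimage_le [SigmaFinite μ]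
    (hT : MeasurePreserving T μ μ) (hDK : DarlingKacSet T μ a A) {C : Set E}
    (hC : MeasurableSet C) (hCA : C ⊆ A) :
    ∀ᶠ n in atTop, ∑ k ∈ Finset.Icc 1 n, μ (A ∩ T^[k] ⁻¹' C)
      ≤ ENNReal.ofReal (a n * ((μ A).toReal + 1)) * μ C := by
  filter_upwards [hDK.eventually_ae_sum_iterate_dualPos_le hT] with n hn
  calc ∑ k ∈ Finset.Icc 1 n, μ (A ∩ T^[k] ⁻¹' C)
      = ∑ k ∈ Finset.Icc 1 n, ∫⁻ x in C, (dualPos T μ)^[k] (A.indicator 1) x ∂μ :=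
        Finset.sum_congr rfl fun k _ =>
          (setLIntegral_iterate_dualPos_indicator_one hT hDK.1 k hC).symm
    _ = ∫⁻ x in C, ∑ k ∈ Finset.Icc 1 n, (dualPos T μ)^[k] (A.indicator 1) x ∂μ :=
        (lintegral_finsetSum _ fun k _ =>
          measurable_iterate_dualPos (measurable_one.indicator hDK.1) k).symm
    _ ≤ ∫⁻ _ in C, ENNReal.ofReal (a n * ((μ A).toReal + 1)) ∂μ :=
        lintegral_mono_ae (ae_restrict_of_ae_restrict_of_subset hCA hn)
    _ = ENNReal.ofReal (a n * ((μ A).toReal + 1)) * μ C := setLIntegral_const _ _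

theorem DarlingKacSet.eventually_sum_toReal_measure_inter_preimage_le [SigmaFinite μ]
    (hT : MeasurePreserving T μ μ) (hDK : DarlingKacSet T μ a A) {C : Set E}
    (hC : MeasurableSet C) (hCA : C ⊆ A) :
    ∀ᶠ n in atTop, ∑ k ∈ Finset.Icc 1 n, (μ (C ∩ T^[k] ⁻¹' C)).toReal
      ≤ a n * ((μ A).toReal + 1) * (μ C).toReal := by
  have hsum := hDK.eventually_sum_measure_inter_preimage_le hT hC hCA
  obtain ⟨-, -, hAfin, hatop, -⟩ := hDK
  have hμC : μ C ≠ ⊤ := ((measure_mono hCA).trans_lt hAfin).ne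
  filter_upwards [hsum, hatop.eventually_ge_atTop 0] with n hn ha
  rw [← ENNReal.toReal_sum fun k _ =>
    ne_top_of_le_ne_top hμC (measure_mono Set.inter_subset_left)]
  refine (ENNReal.toReal_mono (ENNReal.mul_ne_top ENNReal.ofReal_ne_top hμC)
    ((Finset.sum_le_sum fun k _ => measure_mono (Set.inter_subset_inter_left _ hCA)).trans
      hn)).trans_eq ?_
  rw [ENNReal.toReal_mul, ENNReal.toReal_ofReal (mul_nonneg ha (by positivity))]

end DarlingKac

theorem darlingKac_ergodicity_condition_general
    {E : Type*} [MeasurableSpace E] (μ : Measure E) [SigmaFinite μ]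
    (T : E → E) (hT : MeasurePreserving T μ μ)
    (a : ℕ → ℝ) (A : Set E) (hDK : DarlingKacSet T μ a A)
    (han : Tendsto (fun n : ℕ => a n / (n : ℝ)) atTop (nhds 0))
    (f : E → ℝ) (hfmeas : Measurable f) (hsupp : ∀ x ∉ A, f x = 0)
    (ε : ℝ) (hε : 0 < ε) :
    Tendsto
      (fun n : ℕ => ((n : ℝ))⁻¹ *
        ∑ k ∈ Finset.Icc 1 n, (μ {x | ε < |f x| ∧ ε < |f (T^[k] x)|}).toReal)
      atTop (nhds 0) := by
  set C : Set E := {x | ε < |f x|}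
  have hC : MeasurableSet C := measurableSet_lt measurable_const hfmeas.abs
  have hCA : C ⊆ A := fun x (hx : ε < |f x|) =>
    by_contra fun hxA => hx.not_ge (by rw [hsupp x hxA, abs_zero]; exact hε.le)
  have hbound : ∀ᶠ n : ℕ in atTop, ((n : ℝ))⁻¹ *
      ∑ k ∈ Finset.Icc 1 n, (μ {x | ε < |f x| ∧ ε < |f (T^[k] x)|}).toReal
        ≤ a n / n * (((μ A).toReal + 1) * (μ C).toReal) := by
    filter_upwards [hDK.eventually_sum_toReal_measure_inter_preimage_le hT hC hCA] with n hn
    calc ((n : ℝ))⁻¹ * ∑ k ∈ Finset.Icc 1 n, (μ (C ∩ T^[k] ⁻¹' C)).toReal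
        ≤ (n : ℝ)⁻¹ * (a n * ((μ A).toReal + 1) * (μ C).toReal) := by gcongr
      _ = a n / n * (((μ A).toReal + 1) * (μ C).toReal) := by ring
  exact squeeze_zero' (Eventually.of_forall fun n => by positivity) hbound
    (by simpa using han.mul_const (((μ A).toReal + 1) * (μ C).toReal))

/-- If `A` is a Darling–Kac set with `a_n/n → 0` and `f` vanishes outside `A`,
then `(1/n) Σ_{k=1}^n μ{|f| > ε, |f ∘ T^k| > ε} → 0` for every `ε > 0`. -/
theorem darlingKac_ergodicity_condition
    {E : Type*} [MeasurableSpace E] (μ : Measure E) [SigmaFinite μ]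
    (hInf : μ Set.univ = ⊤)
    (T : E → E) (hT : MeasurePreserving T μ μ) (hcons : Conservative T μ)
    (herg : Ergodic T μ)
    (a : ℕ → ℝ) (A : Set E) (hDK : DarlingKacSet T μ a A)
    (han : Tendsto (fun n : ℕ => a n / (n : ℝ)) atTop (nhds 0))
    (f : E → ℝ) (hfmeas : Measurable f) (hsupp : ∀ x ∉ A, f x = 0)
    (ε : ℝ) (hε : 0 < ε) :
    Tendsto
      (fun n : ℕ => ((n : ℝ))⁻¹ *
        ∑ k ∈ Finset.Icc 1 n, (μ {x | ε < |f x| ∧ ε < |f (T^[k] x)|}).toReal)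
      atTop (nhds 0) :=
  darlingKac_ergodicity_condition_general μ T hT a A hDK han f hfmeas hsupp ε hε
end
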